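/- arXiv:1802.00481 — 8 statements merged into one kernel-verified Lean document; each statement's English description precedes it below -/
import Mathlib

section
/- Let ℓ₁,…,ℓₙ be linearly independent linear forms on kⁿ, let α=(α₁,…,αₙ) be a weight with all αᵢ>0, and ν = ν_{id,α} the associated monomial valuation. Let α⁺ denote α reordered in decreasing order. Then for every index i (1 ≤ i ≤ n), one has −ν(ℓᵢ) − ⋯ − ν(ℓₙ) ≥ α⁺ᵢ + ⋯ + α⁺ₙ. -/
open MvPolynomial
open scoped Classical

/-- The monomial valuation `ν_{id,α}`. -/
noncomputable def nuMon (n : ℕ) (k : Type*) [CommRing k] (α : Fin n → ℝ)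
    (P : MvPolynomial (Fin n) k) : EReal :=
  if h : P = 0 then ⊤
  else (((P.support.inf' (by rwa [MvPolynomial.support_nonempty])
      fun I => -(∑ j, α j * (I j : ℝ))) : ℝ) : EReal)

lemma sum_antitone_le {n : ℕ} (αp : Fin n → ℝ) (hpos : ∀ j, 0 ≤ αp j)
    (hdec : ∀ i j : Fin n, i ≤ j → αp j ≤ αp i) (i : Fin n)
    (T : Finset (Fin n)) (hT : (Finset.Ici i).card ≤ T.card) :
    ∑ j ∈ Finset.Ici i, αp j ≤ ∑ j ∈ T, αp j := by
  have h1 : ∑ j ∈ Finset.Ici i, αp j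
      = ∑ j ∈ Finset.Ici i \ T, αp j + ∑ j ∈ Finset.Ici i ∩ T, αp j := by
    have := (Finset.sum_sdiff (f := αp)
      (Finset.inter_subset_left (s₁ := Finset.Ici i) (s₂ := T))).symm
    rwa [Finset.sdiff_inter_self_left] at this
  have h2 : ∑ j ∈ T, αp j
      = ∑ j ∈ T \ Finset.Ici i, αp j + ∑ j ∈ T ∩ Finset.Ici i, αp j := by
    have := (Finset.sum_sdiff (f := αp)
      (Finset.inter_subset_left (s₁ := T) (s₂ := Finset.Ici i))).symm
    rwa [Finset.sdiff_inter_self_left] at this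
  rw [h1, h2, Finset.inter_comm]
  have hcard : (Finset.Ici i \ T).card ≤ (T \ Finset.Ici i).card := by
    have e1 := Finset.card_sdiff_add_card_inter (Finset.Ici i) T
    have e2 := Finset.card_sdiff_add_card_inter T (Finset.Ici i)
    rw [Finset.inter_comm] at e2
    omega
  have key : ∑ j ∈ Finset.Ici i \ T, αp j ≤ ∑ j ∈ T \ Finset.Ici i, αp j := by
    calc ∑ j ∈ Finset.Ici i \ T, αp j ≤ (Finset.Ici i \ T).card • αp i := by
          apply Finset.sum_le_card_nsmul
          intro x hx
          exact hdec i x (Finset.mem_Ici.mp (Finset.mem_sdiff.mp hx).1)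
      _ ≤ (T \ Finset.Ici i).card • αp i := by
          exact nsmul_le_nsmul_left (hpos i) hcard
      _ ≤ ∑ j ∈ T \ Finset.Ici i, αp j := by
          apply Finset.card_nsmul_le_sum
          intro x hx
          have hxlt : x < i := by
            have := (Finset.mem_sdiff.mp hx).2
            simpa using this
          exact hdec x i hxlt.le
  linarith

lemma exists_perm_ne_zero {n : ℕ} {k : Type*} [Field k] (a : Fin n → Fin n → k)
    (hind : LinearIndependent k a) :
    ∃ τ : Equiv.Perm (Fin n), ∀ j, a j (τ j) ≠ 0 := by
  have hdet : (Matrix.of a).det ≠ 0 := by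
    have : IsUnit (Matrix.of a) := Matrix.linearIndependent_rows_iff_isUnit.mp hind
    exact ((Matrix.isUnit_iff_isUnit_det _).mp this).ne_zero
  by_contra h
  push_neg at h
  apply hdet
  rw [Matrix.det_apply]
  apply Finset.sum_eq_zero
  intro τ _
  obtain ⟨j, hj⟩ := h τ⁻¹
  have hz : ∏ i, (Matrix.of a) (τ i) i = 0 :=
    Finset.prod_eq_zero (Finset.mem_univ (τ⁻¹ j)) (by simpa using hj)
  rw [hz]
  simp

lemma ereal_coe_sum {ι : Type*} (s : Finset ι) (f : ι → ℝ) :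
    ((∑ j ∈ s, f j : ℝ) : EReal) = ∑ j ∈ s, ((f j : ℝ) : EReal) :=
  map_sum (⟨⟨(fun x : ℝ => (x : EReal)), EReal.coe_zero⟩, EReal.coe_add⟩ : ℝ →+ EReal) f s

/-- for linearly independent linear forms ℓ₁,…,ℓₙ and the monomial
valuation ν = ν_{id,α}, for every i one has
−ν(ℓᵢ) − ⋯ − ν(ℓₙ) ≥ α⁺ᵢ + ⋯ + α⁺ₙ, where α⁺ is the nonincreasing
rearrangement of α. -/
theorem sum_neg_nuMon_linear_forms_ge (n : ℕ) (k : Type*) [Field k]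
    (α : Fin n → ℝ) (hα : ∀ i, 0 < α i)
    (αp : Fin n → ℝ) (σ : Equiv.Perm (Fin n)) (hperm : αp = α ∘ σ)
    (hdec : ∀ i j : Fin n, i ≤ j → αp j ≤ αp i)
    (a : Fin n → Fin n → k) (hind : LinearIndependent k a) :
    ∀ i : Fin n,
      ((∑ j ∈ Finset.Ici i, αp j : ℝ) : EReal) ≤
        ∑ j ∈ Finset.Ici i,
          -(nuMon n k α (∑ l, MvPolynomial.C (a j l) * MvPolynomial.X l)) := by
  intro i
  obtain ⟨τ, hτ⟩ := exists_perm_ne_zero a hind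
  -- coefficient computation
  have hcoeff : ∀ j : Fin n, MvPolynomial.coeff (Finsupp.single (τ j) 1)
      (∑ l, MvPolynomial.C (a j l) * MvPolynomial.X l) = a j (τ j) := by
    intro j
    rw [MvPolynomial.coeff_sum]
    rw [Finset.sum_eq_single (τ j)]
    · simp [MvPolynomial.coeff_C_mul, MvPolynomial.coeff_X']
    · intro b _ hb
      simp only [MvPolynomial.coeff_C_mul, MvPolynomial.coeff_X']
      rw [if_neg, mul_zero]
      intro hc
      exact hb (Finsupp.single_left_injective one_ne_zero hc)
    · simp
  have hstep : ∀ j : Fin n, ((α (τ j) : ℝ) : EReal) ≤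
      -(nuMon n k α (∑ l, MvPolynomial.C (a j l) * MvPolynomial.X l)) := by
    intro j
    set P := ∑ l, MvPolynomial.C (a j l) * MvPolynomial.X l with hP
    have hne : P ≠ 0 := by
      intro h0
      apply hτ j
      rw [← hcoeff j, ← hP, h0, MvPolynomial.coeff_zero]
    have hmem : Finsupp.single (τ j) 1 ∈ P.support := by
      rw [MvPolynomial.mem_support_iff, hcoeff j]
      exact hτ j
    have hval : -(∑ l, α l * ((Finsupp.single (τ j) 1 : Fin n →₀ ℕ) l : ℝ)) = -(α (τ j)) := by
      congr 1
      rw [Finset.sum_eq_single (τ j)]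
      · simp
      · intro b _ hb
        rw [Finsupp.single_apply, if_neg (fun h => hb h.symm)]
        simp
      · simp
    have : nuMon n k α P ≤ ((-(α (τ j)) : ℝ) : EReal) := by
      rw [nuMon, dif_neg hne]
      apply EReal.coe_le_coe_iff.mpr
      calc _ ≤ -(∑ l, α l * ((Finsupp.single (τ j) 1 : Fin n →₀ ℕ) l : ℝ)) :=
            Finset.inf'_le _ hmem
        _ = -(α (τ j)) := hval
    have h2 := EReal.neg_le_neg_iff.mpr this
    simpa using h2
  -- real-side inequality
  have hreal : ∑ j ∈ Finset.Ici i, αp j ≤ ∑ j ∈ Finset.Ici i, α (τ j) := by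
    have h1 : ∑ j ∈ Finset.Ici i, α (τ j)
        = ∑ l ∈ (Finset.Ici i).image τ, α l :=
      (Finset.sum_image (fun x _ y _ h => τ.injective h)).symm
    have h2 : ∑ l ∈ (Finset.Ici i).image τ, α l
        = ∑ m ∈ ((Finset.Ici i).image τ).image σ.symm, αp m := by
      rw [Finset.sum_image (fun x _ y _ h => σ.symm.injective h)]
      apply Finset.sum_congr rfl
      intro l _
      simp [hperm]
    rw [h1, h2]
    apply sum_antitone_le αp (fun j => (by rw [hperm]; exact (hα _).le)) hdec i
    rw [Finset.card_image_of_injective _ σ.symm.injective,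
      Finset.card_image_of_injective _ τ.injective]
  calc ((∑ j ∈ Finset.Ici i, αp j : ℝ) : EReal)
      ≤ ((∑ j ∈ Finset.Ici i, α (τ j) : ℝ) : EReal) := EReal.coe_le_coe_iff.mpr hreal
    _ = ∑ j ∈ Finset.Ici i, ((α (τ j) : ℝ) : EReal) := ereal_coe_sum _ _
    _ ≤ _ := Finset.sum_le_sum (fun j _ => hstep j)
end

section
/- For every compact subset K of the open simplex ∇ = {[α₁:…:αₙ] : αᵢ > 0} (projectivization of the positive orthant), the set of admissible hyperplanes meeting K is finite. Concretely: for every p ≥ 1, only finitely many tuples (i, (mⱼ)_{j≠i}) of an index i and nonnegative integers mⱼ not all zero are such that the hyperplane {α : αᵢ = ∑_{j≠i} mⱼαⱼ} meets K_p = {[α] : max αⱼ ≤ p · min αⱼ}. -/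
/-- for every `p ≥ 1`, only finitely many admissible hyperplanes
(given by an index `i` and nonnegative integers `mⱼ` with `mᵢ = 0`, not all
zero) meet the compact set `K_p = {[α] : max αⱼ ≤ p · min αⱼ}` of the open
simplex of projectivized positive weights. -/
theorem admissible_hyperplanes_meeting_Kp_finite (n p : ℕ) (hp : 1 ≤ p) :
    {im : Fin n × (Fin n → ℕ) |
      im.2 im.1 = 0 ∧ im.2 ≠ 0 ∧
      ∃ α : Fin n → ℝ, (∀ j, 0 < α j) ∧ (∀ j l, α j ≤ (p : ℝ) * α l) ∧
        α im.1 = ∑ j, (im.2 j : ℝ) * α j}.Finite := by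
  have hp' : (0:ℝ) < p := by exact_mod_cast Nat.lt_of_lt_of_le Nat.zero_lt_one hp
  apply Set.Finite.subset
    (Set.finite_univ.prod (Set.Finite.pi (fun _ : Fin n => Set.finite_Iic p)))
  rintro ⟨i, m⟩ ⟨h0, hne, α, hpos, hle, heq⟩
  refine ⟨Set.mem_univ _, fun j _ => ?_⟩
  have key : (∑ j, (m j : ℝ)) ≤ p := by
    have h1 : (∑ j, (m j : ℝ)) * (α i / p) ≤ α i := by
      calc (∑ j, (m j : ℝ)) * (α i / p) = ∑ j, (m j : ℝ) * (α i / p) := by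
            rw [Finset.sum_mul]
        _ ≤ ∑ j, (m j : ℝ) * α j := by
            apply Finset.sum_le_sum
            intro k _
            apply mul_le_mul_of_nonneg_left _ (Nat.cast_nonneg _)
            rw [div_le_iff₀ hp']
            calc α i ≤ p * α k := hle i k
              _ = α k * p := mul_comm _ _
        _ = α i := heq.symm
    have hαi := hpos i
    have h2 := mul_le_mul_of_nonneg_right h1 hp'.le
    rw [mul_assoc, div_mul_cancel₀ _ hp'.ne'] at h2
    nlinarith [h2, hαi]
  have hj : (m j : ℝ) ≤ ∑ k, (m k : ℝ) :=
    Finset.single_le_sum (f := fun k => (m k : ℝ)) (fun k _ => Nat.cast_nonneg (m k)) (Finset.mem_univ j)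
  exact_mod_cast le_trans hj key
end

section
/- Let k be a field, α a weight with α₁ ≥ ⋯ ≥ αₙ > 0, and f = (f₁,…,fₙ) a polynomial automorphism of kⁿ fixing the monomial valuation ν_{id,α} (i.e., ν_{id,α}(P∘f) = ν_{id,α}(P) for all P). Write the constant-free part of each fᵢ as ℓᵢ + Pᵢ with ℓᵢ linear and Pᵢ containing only monomials of total degree ≥ 2. Then each ℓᵢ satisfies −ν_{id,α}(ℓᵢ) = αᵢ, i.e., every variable xⱼ appearing in ℓᵢ has αⱼ ≤ αᵢ and some variable with αⱼ = αᵢ appears; and every monomial of Pᵢ has α-weighted degree ≤ αᵢ and involves only variables xⱼ with αⱼ < αᵢ. -/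
open MvPolynomial
open scoped Classical

namespace Finsupp

variable {σ : Type*} [Fintype σ] {α : σ → ℝ}

theorem sum_mul_eq_weight (d : σ →₀ ℕ) : ∑ j, α j * (d j : ℝ) = weight α d := by
  simp [weight_eq_sum, nsmul_eq_mul, mul_comm]

theorem weight_pos_of_ne_zero (hpos : ∀ t, 0 < α t) {e : σ →₀ ℕ} (he : e ≠ 0) :
    0 < weight α e := by
  obtain ⟨t, ht⟩ := Finsupp.ne_iff.1 he
  rw [weight_eq_sum]
  refine Finset.sum_pos' (fun s _ => nsmul_nonneg (hpos s).le _) ⟨t, Finset.mem_univ t, ?_⟩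
  exact nsmul_pos (hpos t) ht

theorem lt_weight_of_two_le_degree (hpos : ∀ t, 0 < α t) {d : σ →₀ ℕ} (hdeg : 2 ≤ degree d)
    {j : σ} (hj : d j ≠ 0) : α j < weight α d := by
  have hrest : degree (d - single j 1) + 1 = degree d := by
    conv_rhs => rw [← sub_add_single_one_cancel hj]
    rw [map_add, degree_single]
  have hne : d - single j 1 ≠ 0 := by
    intro h
    rw [h, map_zero] at hrest
    omega
  rw [← weight_sub_single_add hj]
  linarith [weight_pos_of_ne_zero hpos hne]

end Finsupp

section

variable {n : ℕ} {k : Type*} [CommRing k] {α : Fin n → ℝ}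

theorem nuMon_X [Nontrivial k] (i : Fin n) : nuMon n k α (X i) = ((-α i : ℝ) : EReal) := by
  simp only [nuMon, X_ne_zero, dite_false, support_X, Finset.inf'_singleton,
    Finsupp.sum_mul_eq_weight, Finsupp.weight_single, one_smul]

theorem weight_le_of_nuMon_eq {P : MvPolynomial (Fin n) k} {a : ℝ}
    (h : nuMon n k α P = ((-a : ℝ) : EReal)) {d : Fin n →₀ ℕ} (hd : d ∈ P.support) :
    Finsupp.weight α d ≤ a := by
  have hP : P ≠ 0 := by rintro rfl; simp at hd
  rw [nuMon, dif_neg hP, EReal.coe_eq_coe_iff] at h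
  have := h ▸ Finset.inf'_le (fun I : Fin n →₀ ℕ => -(∑ j, α j * (I j : ℝ))) hd
  rw [Finsupp.sum_mul_eq_weight] at this
  linarith

end

namespace Matrix

theorem exists_ne_zero_of_mul_eq_one_of_blockTriangular {ι R : Type*} [Fintype ι] [DecidableEq ι]
    [CommRing R] [Nontrivial R] {A B : Matrix ι ι R} (hBA : B * A = 1) (p : ι → Prop)
    (hA : ∀ r j, p j → A r j ≠ 0 → p r) {i : ι} (hi : p i) : ∃ j, p j ∧ A i j ≠ 0 := by
  let A' : Matrix {j // p j} {j // p j} R := A.submatrix Subtype.val Subtype.val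
  let B' : Matrix {j // p j} {j // p j} R := B.submatrix Subtype.val Subtype.val
  have hBA' : B' * A' = 1 := by
    ext s s'
    have hsum : ∑ t, B s t * A t s' = ∑ t : {j // p j}, B s t * A t s' := by
      rw [← Fintype.sum_subtype_add_sum_subtype p, add_eq_left]
      refine Finset.sum_eq_zero fun t _ => ?_
      rw [not_not.1 (mt (hA t s' s'.2) t.2), mul_zero]
    simpa [A', B', mul_apply, one_apply, Subtype.ext_iff, ← hsum] using congrFun₂ hBA s s'
  by_contra! hrow
  have hdet : A'.det = 0 := det_eq_zero_of_row_eq_zero ⟨i, hi⟩ fun j => hrow j j.2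
  exact not_isUnit_zero (hdet ▸ isUnit_det_of_left_inverse hBA')

end Matrix

namespace MvPolynomial

variable {σ τ ι R : Type*} [CommRing R]

theorem pderiv_aeval [Fintype σ] (f : σ → MvPolynomial τ R)
    (P : MvPolynomial σ R) (j : τ) :
    pderiv j (aeval f P) = ∑ t, aeval f (pderiv t P) * pderiv j (f t) := by
  classical
  induction P using MvPolynomial.induction_on with
  | C a => simp
  | add p q hp hq => simp only [map_add, hp, hq, add_mul, Finset.sum_add_distrib]
  | mul_X p s hp =>
    simp only [map_mul, aeval_X, Derivation.leibniz, pderiv_X, smul_eq_mul, map_add, hp,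
      add_mul, Finset.sum_add_distrib, Finset.mul_sum, Pi.single_apply]
    simp [mul_assoc]

noncomputable def jacobianAt (f : ι → MvPolynomial σ R) (x : σ → R) :
    Matrix ι σ R :=
  Matrix.of fun t j => eval x (pderiv j (f t))

theorem jacobianAt_comp [Fintype σ] (g : ι → MvPolynomial σ R)
    (f : σ → MvPolynomial τ R) (x : τ → R) :
    jacobianAt (fun i => aeval f (g i)) x =
      jacobianAt g (fun t => eval x (f t)) * jacobianAt f x := by
  ext i j
  simp only [jacobianAt, Matrix.of_apply, Matrix.mul_apply, pderiv_aeval, map_sum, map_mul]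
  congr! 2
  exact eval₂Hom_bind₁ (RingHom.id R) x f _

theorem jacobianAt_X [DecidableEq σ] (x : σ → R) : jacobianAt X x = 1 := by
  ext i j
  simp [jacobianAt, pderiv_X, Pi.single_apply, Matrix.one_apply]

theorem jacobianAt_zero_apply (f : ι → MvPolynomial σ R) (t : ι) (j : σ) :
    jacobianAt f 0 t j = coeff (Finsupp.single j 1) (f t) := by
  classical
  simp [jacobianAt, eval_zero, constantCoeff_eq, coeff_pderiv]

end MvPolynomial

theorem stabilizer_component_shape_general (n : ℕ) (k : Type*) [Field k]
    (α : Fin n → ℝ)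
    (hpos : ∀ i, 0 < α i)
    (f g : Fin n → MvPolynomial (Fin n) k)
    (hgf : ∀ i, MvPolynomial.aeval f (g i) = MvPolynomial.X i)
    (hfix : ∀ P, nuMon n k α (MvPolynomial.aeval f P) = nuMon n k α P) :
    ∀ i : Fin n,
      (∀ j, MvPolynomial.coeff (Finsupp.single j 1) (f i) ≠ 0 → α j ≤ α i) ∧
      (∃ j, MvPolynomial.coeff (Finsupp.single j 1) (f i) ≠ 0 ∧ α j = α i) ∧
      (∀ d ∈ (f i).support, 2 ≤ d.sum (fun _ e => e) →
        (∑ j, (d j : ℝ) * α j ≤ α i) ∧ ∀ j, d j ≠ 0 → α j < α i) := by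
  have hweight : ∀ i, ∀ d ∈ (f i).support, Finsupp.weight α d ≤ α i := fun i _ =>
    weight_le_of_nuMon_eq (by rw [← aeval_X (R := k) f i, hfix, nuMon_X])
  have hlinear : ∀ i j, coeff (Finsupp.single j 1) (f i) ≠ 0 → α j ≤ α i := fun i j hij => by
    simpa [Finsupp.weight_single] using hweight i _ (mem_support_iff.2 hij)
  have hjac : jacobianAt g (fun t => eval 0 (f t)) * jacobianAt f 0 = 1 := by
    rw [← jacobianAt_comp, funext hgf, jacobianAt_X]
  intro i
  refine ⟨hlinear i, ?_, fun d hd hdeg => ⟨?_, fun j hj => ?_⟩⟩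
  · obtain ⟨j, hij, hj⟩ := Matrix.exists_ne_zero_of_mul_eq_one_of_blockTriangular hjac
      (fun j => α i ≤ α j)
      (fun r j hj hrj => hj.trans (hlinear r j (by rwa [jacobianAt_zero_apply] at hrj))) le_rfl
    rw [jacobianAt_zero_apply] at hj
    exact ⟨j, hj, le_antisymm (hlinear i j hj) hij⟩
  · simpa only [Finsupp.sum_mul_eq_weight, mul_comm] using hweight i d hd
  · exact (Finsupp.lt_weight_of_two_le_degree hpos hdeg hj).trans_le (hweight i d hd)

/-- if a polynomial automorphism `f = (f₁,…,fₙ)` of `kⁿ` fixes the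
monomial valuation `ν_{id,α}` with `α₁ ≥ ⋯ ≥ αₙ > 0`, then the linear part
`ℓᵢ` of each `fᵢ` satisfies `−ν_{id,α}(ℓᵢ) = αᵢ` (every variable `xⱼ` in `ℓᵢ`
has `αⱼ ≤ αᵢ`, and some variable with `αⱼ = αᵢ` appears), and every monomial
of total degree `≥ 2` of `fᵢ` has `α`-weighted degree `≤ αᵢ` and involves only
variables `xⱼ` with `αⱼ < αᵢ`. -/
theorem stabilizer_component_shape (n : ℕ) (k : Type*) [Field k]
    (α : Fin n → ℝ) (hmono : ∀ i j : Fin n, i ≤ j → α j ≤ α i)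
    (hpos : ∀ i, 0 < α i)
    (f g : Fin n → MvPolynomial (Fin n) k)
    (hfg : ∀ i, MvPolynomial.aeval g (f i) = MvPolynomial.X i)
    (hgf : ∀ i, MvPolynomial.aeval f (g i) = MvPolynomial.X i)
    (hfix : ∀ P, nuMon n k α (MvPolynomial.aeval f P) = nuMon n k α P) :
    ∀ i : Fin n,
      (∀ j, MvPolynomial.coeff (Finsupp.single j 1) (f i) ≠ 0 → α j ≤ α i) ∧
      (∃ j, MvPolynomial.coeff (Finsupp.single j 1) (f i) ≠ 0 ∧ α j = α i) ∧
      (∀ d ∈ (f i).support, 2 ≤ d.sum (fun _ e => e) →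
        (∑ j, (d j : ℝ) * α j ≤ α i) ∧ ∀ j, d j ≠ 0 → α j < α i) :=
  stabilizer_component_shape_general n k α hpos f g hgf hfix
end

section
/- Let k be a field of characteristic 0 (or any field) and α = (m,p,1) with integers m > p > 1. Let M_α be the group of triangular automorphisms of k³ of the form g = (x₁+P(x₂,x₃), x₂+Q(x₃), x₃+d) with −ν(P) ≤ m and deg Q ≤ p (where −ν assigns x₂ weight p and x₃ weight 1), and let N_α ⊂ M_α be the subset with strict inequalities −ν(P) < m and deg Q < p. Then N_α is a normal subgroup of M_α. -/
open MvPolynomial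

/-- Membership in `M_α` for `α = (m,p,1)`: algebra automorphisms of
`k[x₁,x₂,x₃]` of the form `(x₁+P(x₂,x₃), x₂+Q(x₃), x₃+d)` with every monomial
of `P` of weighted degree (`x₂` of weight `p`, `x₃` of weight `1`) at most `m`
and `deg Q ≤ p`. -/
def InMα (k : Type*) [Field k] (m p : ℕ)
    (f : MvPolynomial (Fin 3) k ≃ₐ[k] MvPolynomial (Fin 3) k) : Prop :=
  ∃ (P Q : MvPolynomial (Fin 3) k) (d : k),
    (∀ e ∈ P.support, e 0 = 0 ∧ p * e 1 + e 2 ≤ m) ∧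
    (∀ e ∈ Q.support, e 0 = 0 ∧ e 1 = 0 ∧ e 2 ≤ p) ∧
    f (X 0) = X 0 + P ∧ f (X 1) = X 1 + Q ∧ f (X 2) = X 2 + C d

/-- Membership in `N_α`: same shape with the strict inequalities
`−ν(P) < m` and `deg Q < p`. -/
def InNα (k : Type*) [Field k] (m p : ℕ)
    (f : MvPolynomial (Fin 3) k ≃ₐ[k] MvPolynomial (Fin 3) k) : Prop :=
  ∃ (P Q : MvPolynomial (Fin 3) k) (d : k),
    (∀ e ∈ P.support, e 0 = 0 ∧ p * e 1 + e 2 < m) ∧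
    (∀ e ∈ Q.support, e 0 = 0 ∧ e 1 = 0 ∧ e 2 < p) ∧
    f (X 0) = X 0 + P ∧ f (X 1) = X 1 + Q ∧ f (X 2) = X 2 + C d

/-! Give `x₁, x₂, x₃` the weights `m, p, 1` and let `F a` be the polynomials of weighted degree
at most `a`, indexed by `ℤ` so that `F (a - 1)` means "degree below `a`" also for `a = 0`.
An automorphism with `f xᵢ ∈ F wᵢ` preserves every `F a`, and since the weights are positive
each `F a` is finite-dimensional, so `f⁻¹` preserves it too. Hence finite-dimensional subspaces
`Vᵢ`, stable under every `f` with `f xᵢ - xᵢ ∈ Vᵢ`, cut out a group `{f | f xᵢ - xᵢ ∈ Vᵢ}`: `M_α` for `Vᵢ = F wᵢ ∩ k[x_{>i}]`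
and `N_α` for `Vᵢ = F (wᵢ - 1)`. An element `g` of `N_α` lowers degrees: `g P - P ∈ F (a - 1)`
for `P ∈ F a`, by telescoping over the factors of each monomial. So for `f ∈ M_α` and
`y = f⁻¹ xᵢ ∈ F wᵢ`, `(f g f⁻¹) xᵢ - xᵢ = f (g y - y) ∈ F (wᵢ - 1)`. -/

section IntGraded

variable {R S : Type*} [CommRing R] [SetLike S R] [AddSubgroupClass S R] (A : ℤ → S)
  [SetLike.GradedMonoid A]

theorem SetLike.prod_sub_prod_mem_graded {κ : Type*} (t : Finset κ) {x y : κ → R} {i : κ → ℤ}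
    (hx : ∀ k ∈ t, x k ∈ A (i k)) (hy : ∀ k ∈ t, y k ∈ A (i k))
    (hxy : ∀ k ∈ t, x k - y k ∈ A (i k - 1)) :
    ∏ k ∈ t, x k - ∏ k ∈ t, y k ∈ A (∑ k ∈ t, i k - 1) := by
  classical
  induction t using Finset.induction_on with
  | empty => simp
  | insert j t hj ih =>
    simp only [Finset.forall_mem_insert] at hx hy hxy
    rw [Finset.prod_insert hj, Finset.prod_insert hj, Finset.sum_insert hj,
      show x j * ∏ k ∈ t, x k - y j * ∏ k ∈ t, y k
        = x j * (∏ k ∈ t, x k - ∏ k ∈ t, y k) + (x j - y j) * ∏ k ∈ t, y k by ring]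
    refine add_mem ?_ ?_
    · have h := SetLike.mul_mem_graded hx.1 (ih hx.2 hy.2 hxy.2)
      rwa [add_sub_assoc]
    · have h := SetLike.mul_mem_graded hxy.1 (SetLike.prod_mem_graded A i y hy.2)
      rwa [sub_add_eq_add_sub] at h

theorem SetLike.pow_sub_pow_mem_graded {x y : R} {i : ℤ} (hx : x ∈ A i) (hy : y ∈ A i)
    (hxy : x - y ∈ A (i - 1)) (n : ℕ) : x ^ n - y ^ n ∈ A (n • i - 1) := by
  simpa using SetLike.prod_sub_prod_mem_graded A (Finset.range n) (i := fun _ => i)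
    (fun _ _ => hx) (fun _ _ => hy) (fun _ _ => hxy)

end IntGraded

theorem LinearEquiv.mapsTo_symm_of_mapsTo {K V : Type*} [Field K] [AddCommGroup V] [Module K V]
    (f : V ≃ₗ[K] V) {W : Submodule K V} [FiniteDimensional K W] (h : Set.MapsTo f W W) :
    Set.MapsTo f.symm W W := by
  have hW : W.map (f : V →ₗ[K] V) = W :=
    Submodule.eq_of_le_of_finrank_eq (Submodule.map_le_iff_le_comap.mpr h)
      (LinearEquiv.finrank_map_eq f W)
  intro y hy
  rw [SetLike.mem_coe, ← hW] at hy
  obtain ⟨x, hx, rfl⟩ := hy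
  simpa using hx

namespace MvPolynomial

section WeightedDegree

variable {σ : Type*} (R : Type*) [CommRing R] (w : σ → ℕ)

noncomputable def restrictWeightedDegree (a : ℤ) : Submodule R (MvPolynomial σ R) :=
  restrictSupport R {e | (Finsupp.weight w e : ℤ) ≤ a}

noncomputable def triangularIncrement [Preorder σ] (i : σ) : Submodule R (MvPolynomial σ R) :=
  restrictWeightedDegree R w (w i) ⊓ Subalgebra.toSubmodule (supported R {j | i < j})

noncomputable def unipotentIncrement (i : σ) : Submodule R (MvPolynomial σ R) :=
  restrictWeightedDegree R w (w i - 1)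

variable {R w}

theorem mem_restrictWeightedDegree_iff {a : ℤ} {P : MvPolynomial σ R} :
    P ∈ restrictWeightedDegree R w a ↔ ∀ e ∈ P.support, (Finsupp.weight w e : ℤ) ≤ a :=
  mem_restrictSupport_iff R

theorem restrictWeightedDegree_mono {a b : ℤ} (hab : a ≤ b) :
    restrictWeightedDegree R w a ≤ restrictWeightedDegree R w b :=
  restrictSupport_mono R fun _ he => le_trans he hab

open scoped Pointwise in
instance : SetLike.GradedMonoid (restrictWeightedDegree R w) where
  one_mem := by
    classical
    rw [mem_restrictWeightedDegree_iff]
    intro e he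
    rw [mem_support_iff, coeff_one] at he
    split_ifs at he with h
    · simp [← h]
    · exact absurd rfl he
  mul_mem a b P Q hP hQ := by
    have hPQ := Submodule.mul_mem_mul hP hQ
    rw [restrictWeightedDegree, restrictWeightedDegree, ← restrictSupport_add] at hPQ
    refine restrictSupport_mono R ?_ hPQ
    rintro _ ⟨e, he, f, hf, rfl⟩
    simp only [Set.mem_ofPred_eq, map_add, Nat.cast_add] at he hf ⊢
    omega

theorem X_mem_restrictWeightedDegree (i : σ) : X i ∈ restrictWeightedDegree R w (w i) := by
  classical
  nontriviality R
  simp [mem_restrictWeightedDegree_iff, support_X, Finsupp.weight_single]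

theorem C_mem_restrictWeightedDegree (c : R) {a : ℤ} (ha : 0 ≤ a) :
    C c ∈ restrictWeightedDegree R w a := by
  rw [← mul_one (C c), ← smul_eq_C_mul]
  exact Submodule.smul_mem _ c (restrictWeightedDegree_mono ha SetLike.GradedOne.one_mem)

theorem mem_restrictWeightedDegree_of_sub_X_mem {P : MvPolynomial σ R} {i : σ} {a : ℤ}
    (h : P - X i ∈ restrictWeightedDegree R w a) (ha : a ≤ w i) :
    P ∈ restrictWeightedDegree R w (w i) := by
  rw [← sub_add_cancel P (X i)]
  exact add_mem (restrictWeightedDegree_mono ha h) (X_mem_restrictWeightedDegree i)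

theorem eq_C_of_mem_restrictWeightedDegree_zero (hw : ∀ i, w i ≠ 0) {P : MvPolynomial σ R}
    (hP : P ∈ restrictWeightedDegree R w 0) : P = C (coeff 0 P) := by
  refine totalDegree_eq_zero_iff_eq_C.mp ((totalDegree_eq_zero_iff σ P).mpr fun e he i => ?_)
  by_contra hei
  have := Finsupp.le_weight_of_ne_zero' w hei
  have := mem_restrictWeightedDegree_iff.mp hP e he
  exact hw i (by omega)

theorem finite_restrictWeightedDegree [Finite σ] (hw : ∀ i, w i ≠ 0) (a : ℤ) :
    Module.Finite R (restrictWeightedDegree R w a) := by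
  have hfin : {e : σ →₀ ℕ | (Finsupp.weight w e : ℤ) ≤ a}.Finite :=
    (Finsupp.finite_of_nat_weight_le w hw a.toNat).subset fun e he => by
      simp only [Set.mem_ofPred_eq] at he ⊢
      omega
  have := hfin.to_subtype
  exact Module.Finite.of_basis (basisRestrictSupport R _)

theorem algHom_apply_eq_aeval (f : MvPolynomial σ R →ₐ[R] MvPolynomial σ R)
    (P : MvPolynomial σ R) : f P = aeval (fun i => f (X i)) P :=
  AlgHom.congr_fun (aeval_unique f) P

theorem aeval_monomial_one_mem_restrictWeightedDegree (e : σ →₀ ℕ) {s : σ → MvPolynomial σ R}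
    (hs : ∀ i, s i ∈ restrictWeightedDegree R w (w i)) :
    aeval s (monomial e (1 : R)) ∈ restrictWeightedDegree R w (Finsupp.weight w e) := by
  rw [aeval_monomial, map_one, one_mul, Finsupp.weight_apply, Finsupp.sum, Nat.cast_sum]
  simp only [smul_eq_mul, Nat.cast_mul, ← nsmul_eq_mul]
  exact SetLike.prod_pow_mem_graded _ (fun i => (w i : ℤ)) _ _ fun i _ => hs i

theorem aeval_mem_restrictWeightedDegree {s : σ → MvPolynomial σ R}
    (hs : ∀ i, s i ∈ restrictWeightedDegree R w (w i)) {a : ℤ} {P : MvPolynomial σ R}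
    (hP : P ∈ restrictWeightedDegree R w a) : aeval s P ∈ restrictWeightedDegree R w a := by
  suffices restrictWeightedDegree R w a ≤
      (restrictWeightedDegree R w a).comap (aeval s).toLinearMap from this hP
  conv_lhs => rw [restrictWeightedDegree, restrictSupport_eq_span]
  rw [Submodule.span_le, Set.image_subset_iff]
  intro e he
  simp only [Set.mem_preimage, SetLike.mem_coe, Submodule.mem_comap, AlgHom.toLinearMap_apply]
  exact restrictWeightedDegree_mono he (aeval_monomial_one_mem_restrictWeightedDegree e hs)

theorem aeval_sub_self_mem_restrictWeightedDegree {s : σ → MvPolynomial σ R}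
    (hs : ∀ i, s i - X i ∈ restrictWeightedDegree R w (w i - 1)) {a : ℤ} {P : MvPolynomial σ R}
    (hP : P ∈ restrictWeightedDegree R w a) :
    aeval s P - P ∈ restrictWeightedDegree R w (a - 1) := by
  suffices restrictWeightedDegree R w a ≤ (restrictWeightedDegree R w (a - 1)).comap
      ((aeval s).toLinearMap - LinearMap.id) from this hP
  conv_lhs => rw [restrictWeightedDegree, restrictSupport_eq_span]
  rw [Submodule.span_le, Set.image_subset_iff]
  intro e he
  have hs' (i : σ) : s i ∈ restrictWeightedDegree R w (w i) :=
    mem_restrictWeightedDegree_of_sub_X_mem (hs i) (by omega)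
  refine restrictWeightedDegree_mono (a := (Finsupp.weight w e : ℤ) - 1) (sub_le_sub_right he 1) ?_
  simp only [LinearMap.sub_apply, AlgHom.toLinearMap_apply, LinearMap.id_apply]
  nth_rw 2 [← aeval_X_left_apply (monomial e 1)]
  rw [aeval_monomial, aeval_monomial, map_one, one_mul, one_mul, Finsupp.weight_apply,
    Finsupp.sum, Nat.cast_sum]
  simp only [smul_eq_mul, Nat.cast_mul, ← nsmul_eq_mul]
  exact SetLike.prod_sub_prod_mem_graded _ _ (fun i _ => SetLike.pow_mem_graded _ (hs' i))
    (fun i _ => SetLike.pow_mem_graded _ (X_mem_restrictWeightedDegree i))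
    (fun i _ => SetLike.pow_sub_pow_mem_graded _ (hs' i) (X_mem_restrictWeightedDegree i) (hs i) _)

theorem mapsTo_restrictWeightedDegree {f : MvPolynomial σ R →ₐ[R] MvPolynomial σ R}
    (hf : ∀ i, f (X i) ∈ restrictWeightedDegree R w (w i)) (a : ℤ) :
    Set.MapsTo f (restrictWeightedDegree R w a) (restrictWeightedDegree R w a) := fun P hP => by
  rw [algHom_apply_eq_aeval f]
  exact aeval_mem_restrictWeightedDegree hf hP

theorem mem_supported_iff_forall_mem_support {s : Set σ} {P : MvPolynomial σ R} :
    P ∈ supported R s ↔ ∀ e ∈ P.support, ∀ j ∉ s, e j = 0 := by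
  rw [mem_supported]
  constructor
  · intro h e he j hj
    by_contra hej
    exact hj (h (mem_vars_iff_mem_support j |>.mpr ⟨e, he, Finsupp.mem_support_iff.mpr hej⟩))
  · intro h j hj
    obtain ⟨e, he, hej⟩ := (mem_vars_iff_mem_support j).mp hj
    by_contra hjs
    exact Finsupp.mem_support_iff.mp hej (h e he j hjs)

theorem mapsTo_supported {f : MvPolynomial σ R →ₐ[R] MvPolynomial σ R} {s : Set σ}
    (hf : ∀ i ∈ s, f (X i) ∈ supported R s) :
    Set.MapsTo f (supported R s) (supported R s) := by
  have h : (supported R s).map f ≤ supported R s := by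
    rw [supported_eq_adjoin_X, AlgHom.map_adjoin, Set.image_image]
    exact Algebra.adjoin_le (Set.image_subset_iff.mpr hf)
  exact fun P hP => h ⟨P, hP, rfl⟩

theorem mem_triangularIncrement_iff [LinearOrder σ] {i : σ} {P : MvPolynomial σ R} :
    P ∈ triangularIncrement R w i ↔
      ∀ e ∈ P.support, (Finsupp.weight w e : ℤ) ≤ w i ∧ ∀ j ≤ i, e j = 0 := by
  simp only [triangularIncrement, Submodule.mem_inf, Subalgebra.mem_toSubmodule,
    mem_restrictWeightedDegree_iff, mem_supported_iff_forall_mem_support, Set.mem_ofPred_eq,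
    not_lt, ← forall₂_and]

end WeightedDegree

section Automorphisms

variable {σ k : Type*} [Field k]

noncomputable def incrementSubgroup (V : σ → Submodule k (MvPolynomial σ k))
    [∀ i, FiniteDimensional k (V i)]
    (hV : ∀ f : MvPolynomial σ k ≃ₐ[k] MvPolynomial σ k,
      (∀ i, f (X i) - X i ∈ V i) → ∀ i, Set.MapsTo f (V i) (V i)) :
    Subgroup (MvPolynomial σ k ≃ₐ[k] MvPolynomial σ k) where
  carrier := {f | ∀ i, f (X i) - X i ∈ V i}
  one_mem' i := by simp
  mul_mem' {f g} hf hg i := by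
    rw [show (f * g) (X i) - X i = f (g (X i) - X i) + (f (X i) - X i) by
      rw [AlgEquiv.mul_apply, map_sub]; ring]
    exact add_mem (hV f hf i (hg i)) (hf i)
  inv_mem' {f} hf i := by
    rw [show f⁻¹ (X i) - X i = -f.symm (f (X i) - X i) by
      rw [map_sub, AlgEquiv.symm_apply_apply]; simp [AlgEquiv.aut_inv]]
    exact neg_mem (f.toLinearEquiv.mapsTo_symm_of_mapsTo (hV f hf i) (hf i))

variable [Finite σ] (w : σ → ℕ) (hw : ∀ i, w i ≠ 0)

noncomputable def weightedUnipotent : Subgroup (MvPolynomial σ k ≃ₐ[k] MvPolynomial σ k) :=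
  haveI (i : σ) : FiniteDimensional k (unipotentIncrement k w i) :=
    finite_restrictWeightedDegree hw _
  incrementSubgroup (unipotentIncrement k w) fun f hf _ =>
    mapsTo_restrictWeightedDegree (f := (f : MvPolynomial σ k →ₐ[k] MvPolynomial σ k))
      (fun j => mem_restrictWeightedDegree_of_sub_X_mem (hf j) (by omega)) _

noncomputable def weightedTriangular [Preorder σ] :
    Subgroup (MvPolynomial σ k ≃ₐ[k] MvPolynomial σ k) :=
  haveI (i : σ) : FiniteDimensional k (triangularIncrement k w i) :=
    haveI := finite_restrictWeightedDegree (R := k) hw (w i)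
    Submodule.finiteDimensional_inf_left _ _
  incrementSubgroup (triangularIncrement k w) fun f hf i => by
    have hdeg := mapsTo_restrictWeightedDegree (f := (f : MvPolynomial σ k →ₐ[k] MvPolynomial σ k))
      (fun j => mem_restrictWeightedDegree_of_sub_X_mem (hf j).1 le_rfl) (w i)
    have hsupp : Set.MapsTo f (supported k {j | i < j}) (supported k {j | i < j}) :=
      mapsTo_supported (f := (f : MvPolynomial σ k →ₐ[k] MvPolynomial σ k)) fun j hij => by
        rw [AlgEquiv.coe_toAlgHom, ← sub_add_cancel (f (X j)) (X j)]
        exact add_mem (supported_mono (fun l hjl => lt_trans hij hjl) (hf j).2)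
          (X_mem_supported.mpr hij)
    exact fun P hP => ⟨hdeg hP.1, hsupp hP.2⟩

variable {w hw}

theorem mem_weightedUnipotent_iff {f : MvPolynomial σ k ≃ₐ[k] MvPolynomial σ k} :
    f ∈ weightedUnipotent w hw ↔ ∀ i, f (X i) - X i ∈ unipotentIncrement k w i :=
  Iff.rfl

theorem mem_weightedTriangular_iff [Preorder σ] {f : MvPolynomial σ k ≃ₐ[k] MvPolynomial σ k} :
    f ∈ weightedTriangular w hw ↔ ∀ i, f (X i) - X i ∈ triangularIncrement k w i :=
  Iff.rfl

theorem conj_mem_weightedUnipotent {f g : MvPolynomial σ k ≃ₐ[k] MvPolynomial σ k}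
    (hf : ∀ i, f (X i) ∈ restrictWeightedDegree k w (w i)) (hg : g ∈ weightedUnipotent w hw) :
    f * g * f⁻¹ ∈ weightedUnipotent w hw := by
  intro i
  have := finite_restrictWeightedDegree (R := k) hw (w i)
  have hf' := mapsTo_restrictWeightedDegree (f := (f : MvPolynomial σ k →ₐ[k] MvPolynomial σ k)) hf
  set y := f.symm (X i)
  have hy : y ∈ restrictWeightedDegree k w (w i) :=
    f.toLinearEquiv.mapsTo_symm_of_mapsTo (hf' _) (X_mem_restrictWeightedDegree i)
  have hgy : g y - y ∈ restrictWeightedDegree k w (w i - 1) := by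
    rw [show g y = aeval (fun j => g (X j)) y from
      algHom_apply_eq_aeval (g : MvPolynomial σ k →ₐ[k] MvPolynomial σ k) y]
    exact aeval_sub_self_mem_restrictWeightedDegree hg hy
  have hconj : (f * g * f⁻¹) (X i) - X i = f (g y - y) := by
    rw [map_sub, f.apply_symm_apply]
    rfl
  rw [hconj]
  exact hf' _ hgy

end Automorphisms

end MvPolynomial

theorem Finsupp.weight_fin_three (a b c : ℕ) (e : Fin 3 →₀ ℕ) :
    Finsupp.weight ![a, b, c] e = a * e 0 + b * e 1 + c * e 2 := by
  simp [Finsupp.weight_eq_sum, Fin.sum_univ_three, mul_comm]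

section Alpha

variable {k : Type*} [Field k] {m p : ℕ}

theorem mem_triangularIncrement_zero_iff {P : MvPolynomial (Fin 3) k} :
    P ∈ triangularIncrement k ![m, p, 1] 0 ↔ ∀ e ∈ P.support, e 0 = 0 ∧ p * e 1 + e 2 ≤ m := by
  rw [mem_triangularIncrement_iff]
  refine forall₂_congr fun e _ => ?_
  simp only [Finsupp.weight_fin_three, Matrix.cons_val_zero, Fin.le_zero_iff, forall_eq]
  constructor
  · rintro ⟨h, he0⟩
    rw [he0] at h
    exact ⟨he0, by omega⟩
  · rintro ⟨he0, h⟩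
    exact ⟨by rw [he0]; omega, he0⟩

theorem mem_triangularIncrement_one_iff {Q : MvPolynomial (Fin 3) k} :
    Q ∈ triangularIncrement k ![m, p, 1] 1 ↔ ∀ e ∈ Q.support, e 0 = 0 ∧ e 1 = 0 ∧ e 2 ≤ p := by
  rw [mem_triangularIncrement_iff]
  refine forall₂_congr fun e _ => ?_
  simp only [Finsupp.weight_fin_three, Matrix.cons_val_one, Matrix.cons_val_zero]
  constructor
  · rintro ⟨h, hlow⟩
    have he0 := hlow 0 (by decide)
    have he1 := hlow 1 (by decide)
    rw [he0, he1] at h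
    exact ⟨he0, he1, by omega⟩
  · rintro ⟨he0, he1, h⟩
    refine ⟨by rw [he0, he1]; omega, fun j hj => ?_⟩
    fin_cases j <;> simp_all

theorem mem_triangularIncrement_two_iff {D : MvPolynomial (Fin 3) k} :
    D ∈ triangularIncrement k ![m, p, 1] 2 ↔ ∃ d, D = C d := by
  have hempty : {j : Fin 3 | 2 < j} = ∅ :=
    Set.eq_empty_of_forall_notMem fun j => not_lt.mpr (Fin.le_last j)
  rw [triangularIncrement, Submodule.mem_inf, Subalgebra.mem_toSubmodule, hempty, supported_empty,
    Algebra.mem_bot]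
  constructor
  · rintro ⟨-, d, rfl⟩
    exact ⟨d, rfl⟩
  · rintro ⟨d, rfl⟩
    exact ⟨C_mem_restrictWeightedDegree d (by simp), d, rfl⟩

theorem mem_unipotentIncrement_zero_iff {P : MvPolynomial (Fin 3) k} :
    P ∈ unipotentIncrement k ![m, p, 1] 0 ↔ ∀ e ∈ P.support, e 0 = 0 ∧ p * e 1 + e 2 < m := by
  rw [unipotentIncrement, mem_restrictWeightedDegree_iff]
  refine forall₂_congr fun e _ => ?_
  simp only [Finsupp.weight_fin_three]
  constructor
  · intro h
    have he0 : e 0 = 0 := by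
      by_contra he0
      have := Nat.le_mul_of_pos_right m (Nat.pos_of_ne_zero he0)
      simp only [Matrix.cons_val_zero] at h
      omega
    rw [he0] at h
    exact ⟨he0, by simp only [Matrix.cons_val_zero] at h; omega⟩
  · rintro ⟨he0, h⟩
    rw [he0]
    simp only [Matrix.cons_val_zero]
    omega

theorem mem_unipotentIncrement_one_iff (hpm : p ≤ m) {Q : MvPolynomial (Fin 3) k} :
    Q ∈ unipotentIncrement k ![m, p, 1] 1 ↔ ∀ e ∈ Q.support, e 0 = 0 ∧ e 1 = 0 ∧ e 2 < p := by
  rw [unipotentIncrement, mem_restrictWeightedDegree_iff]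
  refine forall₂_congr fun e _ => ?_
  simp only [Finsupp.weight_fin_three]
  constructor
  · intro h
    simp only [Matrix.cons_val_one, Matrix.cons_val_zero] at h
    have he0 : e 0 = 0 := by
      by_contra he0
      have := Nat.le_mul_of_pos_right m (Nat.pos_of_ne_zero he0)
      omega
    have he1 : e 1 = 0 := by
      by_contra he1
      have := Nat.le_mul_of_pos_right p (Nat.pos_of_ne_zero he1)
      omega
    rw [he0, he1] at h
    exact ⟨he0, he1, by omega⟩
  · rintro ⟨he0, he1, h⟩
    rw [he0, he1]
    simp only [Matrix.cons_val_one, Matrix.cons_val_zero]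
    omega

theorem mem_unipotentIncrement_two_iff (hw : ∀ i, ![m, p, 1] i ≠ 0) {D : MvPolynomial (Fin 3) k} :
    D ∈ unipotentIncrement k ![m, p, 1] 2 ↔ ∃ d, D = C d := by
  have hidx : ((![m, p, 1] 2 : ℕ) : ℤ) - 1 = 0 := by simp
  rw [unipotentIncrement, hidx]
  exact ⟨fun h => ⟨_, eq_C_of_mem_restrictWeightedDegree_zero hw h⟩,
    by rintro ⟨d, rfl⟩; exact C_mem_restrictWeightedDegree d le_rfl⟩

theorem inMα_iff_mem_weightedTriangular (hw : ∀ i, ![m, p, 1] i ≠ 0)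
    {f : MvPolynomial (Fin 3) k ≃ₐ[k] MvPolynomial (Fin 3) k} :
    InMα k m p f ↔ f ∈ weightedTriangular ![m, p, 1] hw := by
  rw [mem_weightedTriangular_iff]
  constructor
  · rintro ⟨P, Q, d, hP, hQ, hf0, hf1, hf2⟩ i
    fin_cases i
    · simpa [hf0] using mem_triangularIncrement_zero_iff.mpr hP
    · simpa [hf1] using mem_triangularIncrement_one_iff.mpr hQ
    · simpa [hf2] using mem_triangularIncrement_two_iff.mpr ⟨d, rfl⟩
  · intro h
    obtain ⟨d, hd⟩ := mem_triangularIncrement_two_iff.mp (h 2)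
    exact ⟨_, _, d, mem_triangularIncrement_zero_iff.mp (h 0),
      mem_triangularIncrement_one_iff.mp (h 1), (add_sub_cancel _ _).symm,
      (add_sub_cancel _ _).symm, eq_add_of_sub_eq' hd⟩

theorem inNα_iff_mem_weightedUnipotent (hpm : p ≤ m) (hw : ∀ i, ![m, p, 1] i ≠ 0)
    {f : MvPolynomial (Fin 3) k ≃ₐ[k] MvPolynomial (Fin 3) k} :
    InNα k m p f ↔ f ∈ weightedUnipotent ![m, p, 1] hw := by
  rw [mem_weightedUnipotent_iff]
  constructor
  · rintro ⟨P, Q, d, hP, hQ, hf0, hf1, hf2⟩ i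
    fin_cases i
    · simpa [hf0] using mem_unipotentIncrement_zero_iff.mpr hP
    · simpa [hf1] using (mem_unipotentIncrement_one_iff hpm).mpr hQ
    · simpa [hf2] using (mem_unipotentIncrement_two_iff hw).mpr ⟨d, rfl⟩
  · intro h
    obtain ⟨d, hd⟩ := (mem_unipotentIncrement_two_iff hw).mp (h 2)
    exact ⟨_, _, d, mem_unipotentIncrement_zero_iff.mp (h 0),
      (mem_unipotentIncrement_one_iff hpm).mp (h 1), (add_sub_cancel _ _).symm,
      (add_sub_cancel _ _).symm, eq_add_of_sub_eq' hd⟩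

theorem InNα.inMα {f : MvPolynomial (Fin 3) k ≃ₐ[k] MvPolynomial (Fin 3) k} (h : InNα k m p f) :
    InMα k m p f := by
  obtain ⟨P, Q, d, hP, hQ, hf⟩ := h
  exact ⟨P, Q, d, fun e he => ⟨(hP e he).1, (hP e he).2.le⟩,
    fun e he => ⟨(hQ e he).1, (hQ e he).2.1, (hQ e he).2.2.le⟩, hf⟩

end Alpha

/-- for `m > p > 1`, `M_α` and `N_α` are subgroups of the group
of algebra automorphisms of `k[x₁,x₂,x₃]`, `N_α ⊆ M_α`, and `N_α` is a normal
subgroup of `M_α`. -/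
theorem Nα_normal_in_Mα (k : Type*) [Field k] (m p : ℕ) (hpm : p < m) (hp : 1 < p) :
    (InMα k m p 1) ∧
    (∀ f g, InMα k m p f → InMα k m p g → InMα k m p (f * g)) ∧
    (∀ f, InMα k m p f → InMα k m p f⁻¹) ∧
    (InNα k m p 1) ∧
    (∀ f g, InNα k m p f → InNα k m p g → InNα k m p (f * g)) ∧
    (∀ f, InNα k m p f → InNα k m p f⁻¹) ∧
    (∀ f, InNα k m p f → InMα k m p f) ∧
    (∀ f g, InMα k m p f → InNα k m p g → InNα k m p (f * g * f⁻¹)) := by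
  have hw : ∀ i, ![m, p, 1] i ≠ 0 := by
    intro i
    fin_cases i <;> simp <;> omega
  have hNM : ∀ f, InNα k m p f → InMα k m p f := fun _ => InNα.inMα
  simp only [inMα_iff_mem_weightedTriangular hw, inNα_iff_mem_weightedUnipotent hpm.le hw]
    at hNM ⊢
  refine ⟨one_mem _, fun _ _ => mul_mem, fun _ => inv_mem, one_mem _, fun _ _ => mul_mem,
    fun _ => inv_mem, hNM, fun f g hf hg => conj_mem_weightedUnipotent (fun i => ?_) hg⟩
  exact mem_restrictWeightedDegree_of_sub_X_mem (hf i).1 le_rfl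
end

section
/- Identify the projectivized weight space ∇ for n=3 with the plane {(β₁,β₂,β₃) ∈ ℝ³ : ∑βᵢ = 0} via [α] ↦ (log α₁, log α₂, log α₃) (after normalizing α₁α₂α₃=1), with the Euclidean metric. Let α = (m,p,1) with m,p > 0 and 0 ≤ k ≤ m. Consider the curves c₁, c₂, c₃, c₄ in ∇ which are the images of the segments from [m,p,1] toward [0,0,1], [k,0,1], [m−k,0,1], [m,0,1] respectively (traced by admissible lines through [α]). Let θ_{ij} be the angle at the image of [α] between cᵢ and cⱼ. Then θ₁₂ = θ₃₄. -/
open scoped RealInnerProductSpace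

private lemma logAffine (a b : ℝ) (ha : a ≠ 0) :
    HasDerivAt (fun t : ℝ => Real.log ((1 - t) * a + t * b)) ((b - a) / a) 0 := by
  have h : HasDerivAt (fun t : ℝ => (1 - t) * a + t * b) (b - a) 0 := by
    have h1 : (fun t : ℝ => (1 - t) * a + t * b) = fun t : ℝ => a + (b - a) * t := by
      funext t; ring
    rw [h1]
    simpa using ((hasDerivAt_id (0 : ℝ)).const_mul (b - a)).const_add a
  have h2 := h.log (by simpa using ha)
  simpa using h2

private noncomputable def Wvec (m p c : ℝ) : EuclideanSpace ℝ (Fin 3) :=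
  (EuclideanSpace.equiv (Fin 3) ℝ).symm
    (fun j => (![(c - m) / m, (0 - p) / p, (1 - 1) / 1] : Fin 3 → ℝ) j -
      ((c - m) / m + (0 - p) / p + (1 - 1) / 1) / 3)

private lemma Wvec_apply (m p c : ℝ) (i : Fin 3) :
    Wvec m p c i = (![(c - m) / m, (0 - p) / p, (1 - 1) / 1] : Fin 3 → ℝ) i -
      ((c - m) / m + (0 - p) / p + (1 - 1) / 1) / 3 := rfl

private lemma Wvec_inner_eq (m p kk : ℝ) (hm : m ≠ 0) (hp : p ≠ 0) :
    ⟪Wvec m p 0, Wvec m p kk⟫ = ⟪Wvec m p (m - kk), Wvec m p m⟫ := by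
  simp only [PiLp.inner_apply, RCLike.inner_apply, conj_trivial, Fin.sum_univ_three,
    Wvec_apply, Matrix.cons_val_zero, Matrix.cons_val_one, Matrix.head_cons,
    Matrix.cons_val_two, Matrix.tail_cons]
  field_simp
  ring

private lemma Wvec_norm_eq1 (m p : ℝ) (hm : m ≠ 0) (hp : p ≠ 0) :
    ‖Wvec m p 0‖ = ‖Wvec m p m‖ := by
  rw [EuclideanSpace.norm_eq, EuclideanSpace.norm_eq]
  congr 1
  simp only [Fin.sum_univ_three, Wvec_apply, Matrix.cons_val_zero, Matrix.cons_val_one,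
    Matrix.head_cons, Matrix.cons_val_two, Matrix.tail_cons, Real.norm_eq_abs, sq_abs]
  field_simp
  ring

private lemma Wvec_norm_eq2 (m p kk : ℝ) (hm : m ≠ 0) (hp : p ≠ 0) :
    ‖Wvec m p kk‖ = ‖Wvec m p (m - kk)‖ := by
  rw [EuclideanSpace.norm_eq, EuclideanSpace.norm_eq]
  congr 1
  simp only [Fin.sum_univ_three, Wvec_apply, Matrix.cons_val_zero, Matrix.cons_val_one,
    Matrix.head_cons, Matrix.cons_val_two, Matrix.tail_cons, Real.norm_eq_abs, sq_abs]
  field_simp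
  ring

/-- angular lemma: in the Euclidean plane `{∑βᵢ = 0}` obtained
from the projectivized weight space by `[α] ↦ (log αᵢ − mean)`, consider the
curves from `[m,p,1]` toward `[0,0,1]`, `[k,0,1]`, `[m−k,0,1]`, `[m,0,1]`,
with tangent vectors `v γ = d/dt|₀ L((1−t)α + tγ)`.  Then `θ₁₂ = θ₃₄`. -/
theorem angular_lemma (m p kk : ℝ) (hm : 0 < m) (hp : 0 < p)
    (hk0 : 0 ≤ kk) (hkm : kk ≤ m) :
    let L : (Fin 3 → ℝ) → EuclideanSpace ℝ (Fin 3) := fun a =>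
      (EuclideanSpace.equiv (Fin 3) ℝ).symm
        fun j => Real.log (a j) - (∑ l, Real.log (a l)) / 3
    let α : Fin 3 → ℝ := ![m, p, 1]
    let v : (Fin 3 → ℝ) → EuclideanSpace ℝ (Fin 3) := fun γ =>
      deriv (fun t : ℝ => L ((1 - t) • α + t • γ)) 0
    InnerProductGeometry.angle (v ![0, 0, 1]) (v ![kk, 0, 1]) =
      InnerProductGeometry.angle (v ![m - kk, 0, 1]) (v ![m, 0, 1]) := by
  intro L α v
  have hm' : m ≠ 0 := hm.ne'
  have hp' : p ≠ 0 := hp.ne'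
  have key : ∀ c : ℝ, v ![c, 0, 1] = Wvec m p c := by
    intro c
    have hg : HasDerivAt
        (fun t : ℝ => (fun j => Real.log (((1 - t) • α + t • ![c, 0, 1]) j) -
          (∑ l, Real.log (((1 - t) • α + t • ![c, 0, 1]) l)) / 3 : Fin 3 → ℝ))
        (fun j => (![(c - m) / m, (0 - p) / p, (1 - 1) / 1] : Fin 3 → ℝ) j -
          ((c - m) / m + (0 - p) / p + (1 - 1) / 1) / 3) 0 := by
      rw [hasDerivAt_pi]
      intro j
      have hs : HasDerivAt
          (fun t : ℝ => (∑ l, Real.log (((1 - t) • α + t • ![c, 0, 1]) l)) / 3)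
          (((c - m) / m + (0 - p) / p + (1 - 1) / 1) / 3) 0 := by
        simp only [α, Fin.sum_univ_three, Pi.add_apply, Pi.smul_apply, smul_eq_mul,
          Matrix.cons_val_zero, Matrix.cons_val_one, Matrix.head_cons, Matrix.cons_val_two,
          Matrix.tail_cons]
        exact (((logAffine m c hm').add (logAffine p 0 hp')).add
          (logAffine 1 1 one_ne_zero)).div_const 3
      fin_cases j <;>
        simp only [α, Pi.add_apply, Pi.smul_apply, smul_eq_mul,
          Matrix.cons_val_zero, Matrix.cons_val_one, Matrix.head_cons, Matrix.cons_val_two,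
          Matrix.tail_cons, Fin.mk_zero, Fin.mk_one]
      · exact (logAffine m c hm').sub hs
      · exact (logAffine p 0 hp').sub hs
      · exact (logAffine 1 1 one_ne_zero).sub hs
    have hL := ((EuclideanSpace.equiv (Fin 3) ℝ).symm.toContinuousLinearMap.hasFDerivAt).comp_hasDerivAt 0 hg
    exact hL.deriv
  rw [key 0, key kk, key (m - kk), key m]
  rw [InnerProductGeometry.angle, InnerProductGeometry.angle]
  rw [Wvec_inner_eq m p kk hm' hp', Wvec_norm_eq1 m p hm' hp', Wvec_norm_eq2 m p kk hm' hp',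
    mul_comm]
end

section
/- Let k be a field of characteristic 0, G a group of bijections of kⁿ admitting a semidirect product decomposition G = M ⋊ L with L ⊆ GL_n(k), and suppose every element of M is a polynomial (or at least affine-combination-compatible) map such that for every finite sequence m₁,…,m_r ∈ M the average (1/r)∑ᵢ mᵢ (pointwise average of maps kⁿ → kⁿ) again lies in M. Then every finite subgroup F of G is conjugate by an element of M to a subgroup of L. -/
/-!
Write `π_L : G → L` for the projection along `M`; it is a homomorphism because `L` normalizes `M`.
For a finite subgroup `F`, the average `φ = (1/|F|) ∑_{f ∈ F} π_L(f)⁻¹ ∘ f` of elements of `M`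
lies in `M`, and reindexing the sum by `f ↦ f f'` together with linearity of `π_L(f')` gives
`φ ∘ f' = π_L(f') ∘ φ` for every `f' ∈ F`.
-/

open Equiv

section SemidirectDecomposition

variable {Γ : Type*} [Group Γ] {G M L : Subgroup Γ}

noncomputable def lPart (M L : Subgroup Γ) (g : Γ) : Γ :=
  Classical.epsilon fun l => l ∈ L ∧ g * l⁻¹ ∈ M

theorem lPart_spec {g : Γ} (hg : ∃ l ∈ L, g * l⁻¹ ∈ M) :
    lPart M L g ∈ L ∧ g * (lPart M L g)⁻¹ ∈ M :=
  Classical.epsilon_spec hg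

theorem lPart_mem {g : Γ} (hg : ∃ m ∈ M, ∃ l ∈ L, g = m * l) : lPart M L g ∈ L := by
  obtain ⟨m, hm, l, hl, rfl⟩ := hg
  exact (lPart_spec (g := m * l) ⟨l, hl, by simpa using hm⟩).1

theorem lPart_mul_eq (hint : M ⊓ L = ⊥) {m l : Γ} (hm : m ∈ M) (hl : l ∈ L) :
    lPart M L (m * l) = l := by
  obtain ⟨hl', hml'⟩ := lPart_spec (g := m * l) (M := M) ⟨l, hl, by simpa using hm⟩
  have hmem : l * (lPart M L (m * l))⁻¹ ∈ M ⊓ L := by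
    refine ⟨?_, L.mul_mem hl (L.inv_mem hl')⟩
    simpa [mul_assoc] using M.mul_mem (M.inv_mem hm) hml'
  rw [hint, Subgroup.mem_bot, mul_inv_eq_one] at hmem
  exact hmem.symm

variable (hint : M ⊓ L = ⊥) (hLM : ∀ l ∈ L, ∀ m ∈ M, l * m * l⁻¹ ∈ M)
include hint hLM

theorem lPart_mul {g h : Γ} (hg : ∃ m ∈ M, ∃ l ∈ L, g = m * l)
    (hh : ∃ m ∈ M, ∃ l ∈ L, h = m * l) :
    lPart M L (g * h) = lPart M L g * lPart M L h := by
  obtain ⟨m, hm, l, hl, rfl⟩ := hg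
  obtain ⟨m', hm', l', hl', rfl⟩ := hh
  have hgh : m * l * (m' * l') = (m * (l * m' * l⁻¹)) * (l * l') := by group
  rw [hgh, lPart_mul_eq hint (M.mul_mem hm (hLM l hl m' hm')) (L.mul_mem hl hl'),
    lPart_mul_eq hint hm hl, lPart_mul_eq hint hm' hl']

theorem inv_lPart_mul_mem {g : Γ} (hg : ∃ m ∈ M, ∃ l ∈ L, g = m * l) :
    (lPart M L g)⁻¹ * g ∈ M := by
  obtain ⟨m, hm, l, hl, rfl⟩ := hg
  rw [lPart_mul_eq hint hm hl]
  simpa [mul_assoc] using hLM l⁻¹ (L.inv_mem hl) m hm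

noncomputable def lPartHom (hprod : ∀ g ∈ G, ∃ m ∈ M, ∃ l ∈ L, g = m * l) : G →* Γ :=
  MonoidHom.mk' (fun g => lPart M L g) fun g h =>
    lPart_mul hint hLM (hprod g g.2) (hprod h h.2)

end SemidirectDecomposition

section Averaging

variable {k V : Type*} [DivisionRing k] [AddCommGroup V] [Module k V]

theorem exists_mem_eq_inv_card_smul_sum {M : Subgroup (Perm V)}
    (havg : ∀ r : ℕ, 0 < r → ∀ ms : Fin r → Perm V, (∀ i, ms i ∈ M) →
      ∃ m' ∈ M, ∀ x : V, m' x = (r : k)⁻¹ • ∑ i, ms i x)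
    {ι : Type*} [Fintype ι] [Nonempty ι] (ms : ι → Perm V) (hms : ∀ i, ms i ∈ M) :
    ∃ m' ∈ M, ∀ x : V, m' x = (Fintype.card ι : k)⁻¹ • ∑ i, ms i x := by
  let e := Fintype.equivFin ι
  obtain ⟨m', hm', hm'x⟩ := havg _ Fintype.card_pos (fun i => ms (e.symm i)) fun i => hms _
  exact ⟨m', hm', fun x => by rw [hm'x, e.symm.sum_comp fun i => ms i x]⟩

variable {H : Type*} [Group H] [Fintype H] (σ ρ : H →* Perm V)
  (hρ : ∀ h, IsLinearMap k (ρ h))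
include hρ

theorem sum_inv_apply_apply_eq (h' : H) (x : V) :
    ∑ h, (ρ h)⁻¹ (σ h (σ h' x)) = ρ h' (∑ h, (ρ h)⁻¹ (σ h x)) := by
  rw [show ⇑(ρ h') = IsLinearMap.mk' _ (hρ h') from rfl, map_sum]
  refine Fintype.sum_equiv (Equiv.mulRight h') _ _ fun h => ?_
  simp only [coe_mulRight, map_mul, mul_inv_rev, Perm.mul_apply, IsLinearMap.mk'_apply]
  exact ((ρ h').apply_symm_apply _).symm

theorem mul_mul_inv_eq_of_eq_smul_sum {φ : Perm V} {c : k}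
    (hφ : ∀ x, φ x = c • ∑ h, (ρ h)⁻¹ (σ h x)) (h' : H) :
    φ * σ h' * φ⁻¹ = ρ h' := by
  have hcomm : φ * σ h' = ρ h' * φ := by
    ext x
    rw [Perm.mul_apply, Perm.mul_apply, hφ, hφ, sum_inv_apply_apply_eq σ ρ hρ,
      show ⇑(ρ h') = IsLinearMap.mk' _ (hρ h') from rfl, map_smul]
  rw [hcomm, mul_inv_cancel_right]

end Averaging

theorem finite_subgroup_linearizable_general (n : ℕ) (k : Type*) [Field k]
    (G M L : Subgroup (Equiv.Perm (Fin n → k)))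
    (hLG : L ≤ G)
    (hLlin : ∀ g ∈ L, IsLinearMap k (⇑g))
    (hnorm : ∀ g ∈ G, ∀ m ∈ M, g * m * g⁻¹ ∈ M)
    (hint : M ⊓ L = ⊥)
    (hprod : ∀ g ∈ G, ∃ m ∈ M, ∃ l ∈ L, g = m * l)
    (havg : ∀ r : ℕ, 0 < r → ∀ ms : Fin r → Equiv.Perm (Fin n → k),
      (∀ i, ms i ∈ M) →
        ∃ m' ∈ M, ∀ x : Fin n → k, m' x = (r : k)⁻¹ • ∑ i, ms i x)
    (F : Subgroup (Equiv.Perm (Fin n → k))) (hFG : F ≤ G)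
    (hF : (F : Set (Equiv.Perm (Fin n → k))).Finite) :
    ∃ φ ∈ M, ∀ f ∈ F, φ * f * φ⁻¹ ∈ L := by
  have hLM : ∀ l ∈ L, ∀ m ∈ M, l * m * l⁻¹ ∈ M := fun l hl => hnorm l (hLG hl)
  have := hF.to_subtype
  let _ := Fintype.ofFinite F
  let ρ := (lPartHom hint hLM hprod).comp (Subgroup.inclusion hFG)
  have hρL : ∀ f, ρ f ∈ L := fun f => lPart_mem (hprod f (hFG f.2))
  obtain ⟨φ, hφM, hφ⟩ := exists_mem_eq_inv_card_smul_sum havg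
    (fun f => (ρ f)⁻¹ * F.subtype f) fun f => inv_lPart_mul_mem hint hLM (hprod f (hFG f.2))
  refine ⟨φ, hφM, fun f hf => ?_⟩
  rw [show f = F.subtype ⟨f, hf⟩ from rfl,
    mul_mul_inv_eq_of_eq_smul_sum F.subtype ρ (fun f => hLlin _ (hρL f)) hφ]
  exact hρL _

/-- linearization criterion: let `k` have characteristic `0`,
and let `G = M ⋊ L` be a group of bijections of `kⁿ` with `L` consisting of
linear maps and `M` stable under taking (pointwise) averages of finite
sequences of its elements.  Then every finite subgroup `F ≤ G` is conjugate by
an element of `M` to a subgroup of `L`. -/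
theorem finite_subgroup_linearizable (n : ℕ) (k : Type*) [Field k] [CharZero k]
    (G M L : Subgroup (Equiv.Perm (Fin n → k)))
    (hMG : M ≤ G) (hLG : L ≤ G)
    (hLlin : ∀ g ∈ L, IsLinearMap k (⇑g))
    (hnorm : ∀ g ∈ G, ∀ m ∈ M, g * m * g⁻¹ ∈ M)
    (hint : M ⊓ L = ⊥)
    (hprod : ∀ g ∈ G, ∃ m ∈ M, ∃ l ∈ L, g = m * l)
    (havg : ∀ r : ℕ, 0 < r → ∀ ms : Fin r → Equiv.Perm (Fin n → k),
      (∀ i, ms i ∈ M) →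
        ∃ m' ∈ M, ∀ x : Fin n → k, m' x = (r : k)⁻¹ • ∑ i, ms i x)
    (F : Subgroup (Equiv.Perm (Fin n → k))) (hFG : F ≤ G)
    (hF : (F : Set (Equiv.Perm (Fin n → k))).Finite) :
    ∃ φ ∈ M, ∀ f ∈ F, φ * f * φ⁻¹ ∈ L :=
  finite_subgroup_linearizable_general n k G M L hLG hLlin hnorm hint hprod havg F hFG hF
end

section
/- Let α : (t₀,∞) → ℝ³ be a curve with α₁(t) > α₂(t) > α₃(t) > 0 for all t, along which the ratios α₁/α₂ and α₂/α₃ are nondecreasing. Then for any s ≤ t in (t₀,∞), every admissible half-space in ℝ³ containing α(s) also contains α(t). Consequently, any admissible inequality αᵢ ≥ ∑_{j≠i}mⱼαⱼ (mⱼ ∈ ℕ not all zero) satisfied at time s remains satisfied at all later times t ≥ s. -/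
/-- along a curve `α(t)` with `α₁ > α₂ > α₃ > 0` and
nondecreasing ratios `α₁/α₂` and `α₂/α₃`, any admissible inequality
`αᵢ ≥ ∑_{j≠i} mⱼαⱼ` satisfied at time `s` remains satisfied at all `t ≥ s`. -/
theorem admissible_halfspaces_increase_along_curve (t₀ : ℝ)
    (α : ℝ → Fin 3 → ℝ)
    (hpos : ∀ t ∈ Set.Ioi t₀, ∀ i, 0 < α t i)
    (hord1 : ∀ t ∈ Set.Ioi t₀, α t 1 < α t 0)
    (hord2 : ∀ t ∈ Set.Ioi t₀, α t 2 < α t 1)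
    (hmono1 : ∀ s ∈ Set.Ioi t₀, ∀ t ∈ Set.Ioi t₀, s ≤ t →
      α s 0 / α s 1 ≤ α t 0 / α t 1)
    (hmono2 : ∀ s ∈ Set.Ioi t₀, ∀ t ∈ Set.Ioi t₀, s ≤ t →
      α s 1 / α s 2 ≤ α t 1 / α t 2) :
    ∀ s ∈ Set.Ioi t₀, ∀ t ∈ Set.Ioi t₀, s ≤ t →
      ∀ (i : Fin 3) (m : Fin 3 → ℕ), m i = 0 → m ≠ 0 →
        (∑ j, (m j : ℝ) * α s j ≤ α s i) →
          ∑ j, (m j : ℝ) * α t j ≤ α t i := by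
  intro s hs t ht hst i m hmi hm hineq
  have ps := hpos s hs
  have pt := hpos t ht
  have h1 : α s 0 * α t 1 ≤ α t 0 * α s 1 :=
    (div_le_div_iff₀ (ps 1) (pt 1)).mp (hmono1 s hs t ht hst)
  have h2 : α s 1 * α t 2 ≤ α t 1 * α s 2 :=
    (div_le_div_iff₀ (ps 2) (pt 2)).mp (hmono2 s hs t ht hst)
  have m0n : (0:ℝ) ≤ (m 0 : ℝ) := Nat.cast_nonneg _
  have m1n : (0:ℝ) ≤ (m 1 : ℝ) := Nat.cast_nonneg _
  have m2n : (0:ℝ) ≤ (m 2 : ℝ) := Nat.cast_nonneg _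
  simp only [Fin.sum_univ_three] at hineq ⊢
  fin_cases i
  · -- i = 0
    have hmi' : m 0 = 0 := hmi
    have hq : (m 0:ℝ) * α s 0 + m 1 * α s 1 + m 2 * α s 2 ≤ α s 0 := hineq
    show (m 0:ℝ) * α t 0 + m 1 * α t 1 + m 2 * α t 2 ≤ α t 0
    rw [hmi'] at hq ⊢
    push_cast at hq ⊢
    simp only [zero_mul, zero_add, add_zero] at hq ⊢
    -- hq : m1*αs1 + m2*αs2 ≤ αs0
    nlinarith [mul_pos (ps 1) (ps 2), mul_le_mul_of_nonneg_right h1 (ps 2).le,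
      mul_le_mul_of_nonneg_right hq (mul_pos (pt 1) (ps 2)).le,
      mul_le_mul_of_nonneg_right h2 (mul_nonneg m2n (ps 2).le)]
  · -- i = 1
    have hmi' : m 1 = 0 := hmi
    have hq : (m 0:ℝ) * α s 0 + m 1 * α s 1 + m 2 * α s 2 ≤ α s 1 := hineq
    have hm0 : m 0 = 0 := by
      by_contra h
      have h1' : (1:ℝ) ≤ (m 0 : ℝ) := by exact_mod_cast Nat.one_le_iff_ne_zero.mpr h
      nlinarith [hord1 s hs, mul_nonneg m2n (ps 2).le, mul_nonneg m1n (ps 1).le, ps 0]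
    show (m 0:ℝ) * α t 0 + m 1 * α t 1 + m 2 * α t 2 ≤ α t 1
    rw [hm0, hmi'] at hq ⊢
    push_cast at hq ⊢
    simp only [zero_mul, zero_add, add_zero] at hq ⊢
    -- hq : m2 * αs2 ≤ αs1 ; goal : m2 * αt2 ≤ αt1
    nlinarith [mul_le_mul_of_nonneg_right hq (pt 2).le, ps 2, pt 2,
      mul_le_mul_of_nonneg_left h2 m2n]
  · -- i = 2 : impossible
    exfalso
    have hq : (m 0:ℝ) * α s 0 + m 1 * α s 1 + m 2 * α s 2 ≤ α s 2 := hineq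
    have hmi' : m 2 = 0 := hmi
    rw [hmi'] at hq
    push_cast at hq
    simp only [zero_mul, zero_add, add_zero] at hq
    have hm0 : m 0 = 0 := by
      by_contra h
      have h1' : (1:ℝ) ≤ (m 0 : ℝ) := by exact_mod_cast Nat.one_le_iff_ne_zero.mpr h
      nlinarith [hord1 s hs, hord2 s hs, mul_nonneg m1n (ps 1).le, ps 0]
    have hm1 : m 1 = 0 := by
      by_contra h
      have h1' : (1:ℝ) ≤ (m 1 : ℝ) := by exact_mod_cast Nat.one_le_iff_ne_zero.mpr h
      nlinarith [hord2 s hs, mul_nonneg m0n (ps 0).le, ps 1]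
    exact hm (funext fun j => by fin_cases j <;> simpa using (by assumption : _))
end

section
/- Let k be any field and consider g = (x₁ − x₂^r, x₂, …, xₙ) for an integer r ≥ 2. For a weight α with α₂ > α₁ > 0 and all αᵢ > 0, let ν = g·ν_{id,α} (so ν(P) = ν_{id,α}(P∘g)). Then −ν(x₁ + x₂^r) = α₁, whereas for the affine map f = (c₁x₁+t₁, c₂x₂+t₂, x₃, …, xₙ) with c₂^r ≠ c₁ one has −(f·ν)(x₁+x₂^r) = max(α₁, rα₂) = rα₂ > α₁. In particular f·ν ≠ ν. -/
open MvPolynomial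
open scoped Classical

lemma nuMon_eq {n : ℕ} {k : Type*} [CommRing k] (α : Fin n → ℝ)
    (P : MvPolynomial (Fin n) k) (c : ℝ) (I₀ : Fin n →₀ ℕ)
    (h₀ : I₀ ∈ P.support) (hv : -(∑ j, α j * (I₀ j : ℝ)) = c)
    (hall : ∀ I ∈ P.support, c ≤ -(∑ j, α j * (I j : ℝ))) :
    nuMon n k α P = (c : EReal) := by
  have hP : P ≠ 0 := by
    intro h; rw [h] at h₀; simp at h₀
  rw [nuMon, dif_neg hP]
  norm_cast
  apply le_antisymm
  · exact hv ▸ Finset.inf'_le _ h₀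
  · exact Finset.le_inf' _ _ hall

lemma sum_single {n : ℕ} (α : Fin n → ℝ) (a : Fin n) (b : ℕ) :
    ∑ j, α j * ((Finsupp.single a b) j : ℝ) = α a * b := by
  rw [Finset.sum_eq_single a]
  · simp
  · intro j _ hj; simp [Finsupp.single_apply, Ne.symm hj]
  · simp


/-- with `g = (x₁ − x₂^r, x₂, …, xₙ)`, `ν = g·ν_{id,α}` where
`α₂ > α₁ > 0`, and the diagonal affine `f = (c₁x₁+t₁, c₂x₂+t₂, x₃, …)` with
`c₂^r ≠ c₁`, one has `−ν(x₁+x₂^r) = α₁` while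
`−(f·ν)(x₁+x₂^r) = rα₂ > α₁`; in particular `f·ν ≠ ν`. -/
theorem faithfulness_computation (n : ℕ) (k : Type*) [Field k]
    (r : ℕ) (hr : 2 ≤ r)
    (α : Fin (n + 2) → ℝ) (hpos : ∀ i, 0 < α i) (h01 : α 0 < α 1)
    (c₁ c₂ t₁ t₂ : k) (hc₁ : c₁ ≠ 0) (hc₂ : c₂ ≠ 0) (hcr : c₂ ^ r ≠ c₁) :
    let gsub : Fin (n + 2) → MvPolynomial (Fin (n + 2)) k :=
      fun i => if i = 0 then X 0 - X 1 ^ r else X i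
    let fsub : Fin (n + 2) → MvPolynomial (Fin (n + 2)) k :=
      fun i => if i = 0 then C c₁ * X 0 + C t₁
        else if i = 1 then C c₂ * X 1 + C t₂ else X i
    let P₀ : MvPolynomial (Fin (n + 2)) k := X 0 + X 1 ^ r
    nuMon (n + 2) k α (MvPolynomial.aeval gsub P₀) = ((-(α 0) : ℝ) : EReal) ∧
    nuMon (n + 2) k α (MvPolynomial.aeval gsub (MvPolynomial.aeval fsub P₀)) =
      ((-(r * α 1) : ℝ) : EReal) ∧
    α 0 < r * α 1 ∧
    nuMon (n + 2) k α (MvPolynomial.aeval gsub (MvPolynomial.aeval fsub P₀)) ≠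
      nuMon (n + 2) k α (MvPolynomial.aeval gsub P₀) := by
  intro gsub fsub P₀
  have h10 : (1 : Fin (n + 2)) ≠ 0 := by
    simp [Fin.ext_iff]
  have hr0 : r ≠ 0 := by omega
  have hrR : (2 : ℝ) ≤ (r : ℝ) := by exact_mod_cast hr
  have hkey : α 0 < r * α 1 := by nlinarith [hpos 1]
  -- first polynomial
  have e1 : MvPolynomial.aeval gsub P₀ = X 0 := by
    simp [P₀, gsub]
  have part1 : nuMon (n + 2) k α (MvPolynomial.aeval gsub P₀) = ((-(α 0) : ℝ) : EReal) := by
    rw [e1]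
    apply nuMon_eq α _ _ (Finsupp.single 0 1)
    · rw [support_X]; exact Finset.mem_singleton_self _
    · rw [sum_single]; simp
    · intro I hI
      rw [support_X, Finset.mem_singleton] at hI
      subst hI
      rw [sum_single]; simp
  -- second polynomial
  set S : MvPolynomial (Fin (n + 2)) k :=
    C t₁ + C (-c₁) * X 1 ^ r + (C c₂ * X 1 + C t₂) ^ r with hS
  have e2 : MvPolynomial.aeval gsub (MvPolynomial.aeval fsub P₀) = C c₁ * X 0 + S := by
    simp [P₀, fsub, gsub, hS, h10]
    ring
  have hsummand : ∀ m, (C c₂ * X 1 : MvPolynomial (Fin (n + 2)) k) ^ m * (C t₂) ^ (r - m)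
      * ((r.choose m : ℕ) : MvPolynomial (Fin (n + 2)) k)
      = monomial (Finsupp.single 1 m) (c₂ ^ m * t₂ ^ (r - m) * (r.choose m : k)) := by
    intro m
    rw [← C_mul_X_pow_eq_monomial, C_mul, C_mul, C_pow, C_pow]
    push_cast
    rw [map_natCast C]
    ring
  have Sexp : S = monomial (Finsupp.single 1 0) t₁ + monomial (Finsupp.single 1 r) (-c₁)
      + ∑ m ∈ Finset.range (r + 1),
          monomial (Finsupp.single 1 m) (c₂ ^ m * t₂ ^ (r - m) * (r.choose m : k)) := by
    rw [hS, add_pow]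
    congr 1
    · congr 1
      · rw [Finsupp.single_zero, monomial_zero', C_apply]
      · rw [C_mul_X_pow_eq_monomial]
    · exact Finset.sum_congr rfl fun m _ => hsummand m
  have hinj : ∀ m, (Finsupp.single (1 : Fin (n + 2)) m = Finsupp.single 1 r) ↔ m = r :=
    fun m => (Finsupp.single_injective 1).eq_iff
  have hcoeffS : coeff (Finsupp.single 1 r) S = c₂ ^ r - c₁ := by
    rw [Sexp]
    rw [coeff_add, coeff_add, coeff_monomial, coeff_monomial, coeff_sum]
    simp only [coeff_monomial, hinj]
    rw [Finset.sum_ite_eq' (Finset.range (r + 1))]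
    simp [Ne.symm hr0, Nat.lt_succ_self]
    ring
  have hCX : (C c₁ * X 0 : MvPolynomial (Fin (n + 2)) k) = monomial (Finsupp.single 0 1) c₁ := by
    rw [← C_mul_X_pow_eq_monomial, pow_one]
  have hne01 : Finsupp.single (0 : Fin (n + 2)) 1 ≠ Finsupp.single 1 r := by
    intro h
    have h2 := DFunLike.congr_fun h 0
    simp [Finsupp.single_apply, h10] at h2
  have hwit : Finsupp.single (1 : Fin (n + 2)) r ∈
      (MvPolynomial.aeval gsub (MvPolynomial.aeval fsub P₀)).support := by
    rw [mem_support_iff, e2, coeff_add, hcoeffS, hCX, coeff_monomial, if_neg hne01, zero_add]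
    exact sub_ne_zero.mpr hcr
  have hSsupp : S.support ⊆ (Finset.range (r + 1)).image (fun m => Finsupp.single (1 : Fin (n + 2)) m) := by
    rw [Sexp]
    intro I hI
    rcases Finset.mem_union.1 (support_add hI) with h | h
    · rcases Finset.mem_union.1 (support_add h) with h' | h'
      · have := support_monomial_subset h'
        rw [Finset.mem_singleton] at this
        subst this
        exact Finset.mem_image.2 ⟨0, Finset.mem_range.2 (by omega), rfl⟩
      · have := support_monomial_subset h'
        rw [Finset.mem_singleton] at this
        subst this
        exact Finset.mem_image.2 ⟨r, Finset.mem_range.2 (by omega), rfl⟩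
    · rcases Finset.mem_biUnion.1 (support_sum h) with ⟨m, hm, hm2⟩
      have := support_monomial_subset hm2
      rw [Finset.mem_singleton] at this
      subst this
      exact Finset.mem_image.2 ⟨m, hm, rfl⟩
  have part2 : nuMon (n + 2) k α (MvPolynomial.aeval gsub (MvPolynomial.aeval fsub P₀)) =
      ((-(r * α 1) : ℝ) : EReal) := by
    apply nuMon_eq α _ _ (Finsupp.single 1 r) hwit
    · rw [sum_single]; ring
    · intro I hI
      rw [e2] at hI
      rcases Finset.mem_union.1 (support_add hI) with h | h
      · rw [hCX] at h
        have := support_monomial_subset h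
        rw [Finset.mem_singleton] at this
        subst this
        rw [sum_single]
        simp only [Nat.cast_one, mul_one]
        linarith
      · rcases Finset.mem_image.1 (hSsupp h) with ⟨m, hm, hm2⟩
        subst hm2
        rw [sum_single]
        have hmr : (m : ℝ) ≤ r := by exact_mod_cast Nat.le_of_lt_succ (Finset.mem_range.1 hm)
        nlinarith [hpos 1]
  refine ⟨part1, part2, hkey, ?_⟩
  rw [part1, part2]
  intro h
  rw [EReal.coe_eq_coe_iff] at h
  have : r * α 1 = α 0 := by linarith [neg_injective h]
  linarith
end
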